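/- Eigenvalues of the Lindblad generator with zero real part have no nontrivial Jordan blocks: if γ ∈ ℂ with Re γ = 0, then for every integer k ≥ 1 the generalized eigenspace ker((𝓛 − γ·id)^k) equals the eigenspace ker(𝓛 − γ·id), where 𝓛 is viewed as a ℂ-linear endomorphism of M_N(ℂ). -/

import Mathlib

open Matrix
open scoped ComplexOrder

attribute [local instance] Matrix.normedAddCommGroup Matrix.normedSpace

/-- The Lindblad generator `𝓛(ρ) = -i[H,ρ] + Σ_d (V_d ρ V_d† - ½(V_d† V_d ρ + ρ V_d† V_d))`,
as a `ℂ`-linear endomorphism of the matrix space. -/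
noncomputable def lindbladOp {n : Type*} [Fintype n] [DecidableEq n] {ι : Type*} [Fintype ι]
    (H : Matrix n n ℂ) (V : ι → Matrix n n ℂ) :
    Matrix n n ℂ →ₗ[ℂ] Matrix n n ℂ where
  toFun ρ := -Complex.I • (H * ρ - ρ * H) +
    ∑ d, (V d * ρ * (V d)ᴴ - (1 / 2 : ℂ) • ((V d)ᴴ * V d * ρ + ρ * ((V d)ᴴ * V d)))
  map_add' x y := by
    simp only [mul_add, add_mul, smul_add, sub_eq_add_neg, neg_add,
      Finset.sum_add_distrib, Finset.sum_neg_distrib]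
    abel
  map_smul' c x := by
    simp only [Matrix.mul_smul, Matrix.smul_mul, smul_sub, smul_add, Finset.smul_sum,
      smul_comm c, RingHom.id_apply]

/-- A density matrix: positive semidefinite with trace one. -/
def IsDensityMatrix {n : Type*} [Fintype n] (ρ : Matrix n n ℂ) : Prop :=
  ρ.PosSemidef ∧ ρ.trace = 1

/-- A steady state of the Lindblad dynamics. -/
noncomputable def IsSteadyState {n : Type*} [Fintype n] [DecidableEq n] {ι : Type*} [Fintype ι]
    (H : Matrix n n ℂ) (V : ι → Matrix n n ℂ) (ρ : Matrix n n ℂ) : Prop :=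
  IsDensityMatrix ρ ∧ lindbladOp H V ρ = 0

/-- The support of a matrix: its range as a linear map `ℂ^N → ℂ^N`. -/
noncomputable def matSupport {n : Type*} [Fintype n] (ρ : Matrix n n ℂ) :
    Submodule ℂ (n → ℂ) :=
  LinearMap.range ρ.mulVecLin

/-- Time evolution `ρ(t) = exp(t𝓛)(ρ₀)`. -/
noncomputable def evolve {n : Type*} [Fintype n] [DecidableEq n] {ι : Type*} [Fintype ι]
    (H : Matrix n n ℂ) (V : ι → Matrix n n ℂ) (t : ℝ) (ρ : Matrix n n ℂ) : Matrix n n ℂ :=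
  letI : NormedRing (Matrix n n ℂ →L[ℂ] Matrix n n ℂ) := ContinuousLinearMap.toNormedRing
  @NormedSpace.exp _ _ _ NonUnitalSeminormedRing.toIsTopologicalRing
    ((t : ℂ) • (LinearMap.toContinuousLinearMap (lindbladOp H V))) ρ

/-!
A Jordan block of `𝓛` at `γ` with `Re γ = 0` gives `x` and `y ≠ 0` with
`exp (t𝓛) x = e^{tγ} (x + t y)`, which grows linearly in `t`. But `exp (t𝓛)` preserves positive
semidefiniteness and the trace, so it is bounded on positive semidefinite matrices, which span
`M_N(ℂ)`. Positivity comes from writing `exp (t𝓛) = lim (1 + s𝓛 + s² M)^m` with `s = t/m` and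
`M ρ = H_eff ρ H_effᴴ`, because `1 + s𝓛 + s² M` is the manifestly positive map
`ρ ↦ (1 - i s H_eff) ρ (1 - i s H_eff)ᴴ + s Σ V ρ Vᴴ`.
-/
open Filter Topology

section BanachAlgebra

variable {𝕂 A : Type*} [RCLike 𝕂] [NormedRing A] [NormedAlgebra 𝕂 A]

theorem norm_pow_succ_sub_pow_succ_le {P Q : A} {M : ℝ} (hP : ‖P‖ ≤ M) (hQ : ‖Q‖ ≤ M) (n : ℕ) :
    ‖P ^ (n + 1) - Q ^ (n + 1)‖ ≤ (n + 1) * M ^ n * ‖P - Q‖ := by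
  induction n with
  | zero => simp
  | succ n ih =>
    have hM : 0 ≤ M := (norm_nonneg P).trans hP
    have hQn : ‖Q ^ (n + 1)‖ ≤ M ^ (n + 1) :=
      (norm_pow_le' Q n.succ_pos).trans (pow_le_pow_left₀ (norm_nonneg Q) hQ _)
    calc ‖P ^ (n + 2) - Q ^ (n + 2)‖
        = ‖P * (P ^ (n + 1) - Q ^ (n + 1)) + (P - Q) * Q ^ (n + 1)‖ := by
          rw [pow_succ' P (n + 1), pow_succ' Q (n + 1), mul_sub, sub_mul, sub_add_sub_cancel]
      _ ≤ M * ((n + 1) * M ^ n * ‖P - Q‖) + ‖P - Q‖ * M ^ (n + 1) :=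
          (norm_add_le _ _).trans (add_le_add
            ((norm_mul_le _ _).trans (mul_le_mul hP ih (norm_nonneg _) hM))
            ((norm_mul_le _ _).trans (mul_le_mul_of_nonneg_left hQn (norm_nonneg _))))
      _ = (↑(n + 1) + 1) * M ^ (n + 1) * ‖P - Q‖ := by push_cast; ring

theorem tendsto_smul_exp_inv_smul_sub_one [CompleteSpace A] (X : A) :
    Tendsto (fun n : ℕ => (n : 𝕂) • (NormedSpace.exp ((n : 𝕂)⁻¹ • X) - 1)) atTop (𝓝 X) := by
  have hderiv := (hasDerivAt_exp_smul_const' (𝕂 := 𝕂) X 0).tendsto_slope_zero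
  simp only [zero_add, zero_smul, NormedSpace.exp_zero, mul_one] at hderiv
  have hinv : Tendsto (fun n : ℕ => (n : 𝕂)⁻¹) atTop (𝓝[≠] 0) :=
    tendsto_nhdsWithin_iff.mpr ⟨tendsto_inv_atTop_nhds_zero_nat,
      (eventually_ne_atTop 0).mono fun n hn => by simpa using hn⟩
  refine (hderiv.comp hinv).congr fun n => ?_
  simp only [Function.comp_apply, inv_inv]

theorem norm_le_one_add_div_of_smul_sub_one [NormOneClass A] {F Y : A} {n : ℕ} (hn : n ≠ 0)
    (hY : (n : 𝕂) • (F - 1) = Y) : ‖F‖ ≤ 1 + ‖Y‖ / n := by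
  have hF : F = 1 + (n : 𝕂)⁻¹ • Y := by
    rw [← hY, smul_smul, inv_mul_cancel₀ (Nat.cast_ne_zero.mpr hn), one_smul, add_sub_cancel]
  rw [hF]
  refine (norm_add_le _ _).trans_eq ?_
  rw [norm_one, norm_smul, norm_inv, RCLike.norm_natCast, inv_mul_eq_div]

theorem tendsto_pow_sub_pow_of_tendsto_smul_sub_one [NormOneClass A] {F G : ℕ → A} {X : A}
    (hF : Tendsto (fun n : ℕ => (n : 𝕂) • (F n - 1)) atTop (𝓝 X))
    (hG : Tendsto (fun n : ℕ => (n : 𝕂) • (G n - 1)) atTop (𝓝 X)) :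
    Tendsto (fun n => F n ^ n - G n ^ n) atTop (𝓝 0) := by
  set c := ‖X‖ + 1
  have hFG : Tendsto (fun n : ℕ => Real.exp c * ‖(n : 𝕂) • (F n - 1) - (n : 𝕂) • (G n - 1)‖)
      atTop (𝓝 0) := by
    simpa using (hF.sub hG).norm.const_mul (Real.exp c)
  rw [tendsto_zero_iff_norm_tendsto_zero]
  refine squeeze_zero' (Eventually.of_forall fun n => norm_nonneg _) ?_ hFG
  filter_upwards [eventually_ne_atTop 0, hF.norm.eventually (gt_mem_nhds (lt_add_one ‖X‖)),
    hG.norm.eventually (gt_mem_nhds (lt_add_one ‖X‖))] with n hn hFn hGn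
  obtain ⟨m, rfl⟩ := Nat.exists_eq_succ_of_ne_zero hn
  have hM : ∀ {H Y : A}, ((m + 1 : ℕ) : 𝕂) • (H - 1) = Y → ‖Y‖ < c →
      ‖H‖ ≤ 1 + c / (m + 1 : ℕ) := fun hY hYc =>
    (norm_le_one_add_div_of_smul_sub_one hn hY).trans (by gcongr)
  have hpow : (1 + c / (m + 1 : ℕ)) ^ m ≤ Real.exp c :=
    calc (1 + c / (m + 1 : ℕ)) ^ m ≤ (1 + c / (m + 1 : ℕ)) ^ (m + 1) :=
          pow_le_pow_right₀ (le_add_of_nonneg_right (by positivity)) m.le_succ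
      _ ≤ Real.exp c := by
          convert Real.one_sub_div_pow_le_exp_neg (n := m + 1) (t := -c)
            (by linarith [(m + 1 : ℕ).cast_nonneg (α := ℝ), norm_nonneg X]) using 2 <;> ring
  calc ‖F (m + 1) ^ (m + 1) - G (m + 1) ^ (m + 1)‖
      ≤ (m + 1) * (1 + c / (m + 1 : ℕ)) ^ m * ‖F (m + 1) - G (m + 1)‖ :=
        norm_pow_succ_sub_pow_succ_le (hM rfl hFn) (hM rfl hGn) m
    _ = (1 + c / (m + 1 : ℕ)) ^ m * ‖((m + 1 : ℕ) : 𝕂) • (F (m + 1) - 1)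
          - ((m + 1 : ℕ) : 𝕂) • (G (m + 1) - 1)‖ := by
        rw [← smul_sub, sub_sub_sub_cancel_right, norm_smul, RCLike.norm_natCast]
        push_cast
        ring
    _ ≤ _ := by gcongr

theorem tendsto_pow_of_tendsto_smul_sub_one [NormOneClass A] [CompleteSpace A] {F : ℕ → A}
    {X : A} (hF : Tendsto (fun n : ℕ => (n : 𝕂) • (F n - 1)) atTop (𝓝 X)) :
    Tendsto (fun n => F n ^ n) atTop (𝓝 (NormedSpace.exp X)) := by
  have hexp : ∀ᶠ n : ℕ in atTop, NormedSpace.exp ((n : 𝕂)⁻¹ • X) ^ n = NormedSpace.exp X := by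
    let := NormedAlgebra.restrictScalars ℚ 𝕂 A
    filter_upwards [eventually_ne_atTop 0] with n hn
    rw [← NormedSpace.exp_nsmul, ← Nat.cast_smul_eq_nsmul 𝕂, smul_smul,
      mul_inv_cancel₀ (Nat.cast_ne_zero.mpr hn), one_smul]
  have h := (tendsto_pow_sub_pow_of_tendsto_smul_sub_one hF
    (tendsto_smul_exp_inv_smul_sub_one X)).add_const (NormedSpace.exp X)
  rw [zero_add] at h
  refine h.congr' ?_
  filter_upwards [hexp] with n hn
  rw [hn, sub_add_cancel]

theorem tendsto_one_add_smul_add_sq_smul_pow [NormOneClass A] [CompleteSpace A] (X Y : A) (t : 𝕂) :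
    Tendsto (fun n : ℕ => (1 + (t / n) • X + (t / n) ^ 2 • Y) ^ n) atTop
      (𝓝 (NormedSpace.exp (t • X))) := by
  refine tendsto_pow_of_tendsto_smul_sub_one (𝕂 := 𝕂) ?_
  have h : Tendsto (fun n : ℕ => t • X + (t ^ 2 / n) • Y) atTop (𝓝 (t • X)) := by
    simpa using ((tendsto_const_div_atTop_nhds_zero_nat (t ^ 2)).smul_const Y).const_add (t • X)
  refine h.congr' ?_
  filter_upwards [eventually_ne_atTop 0] with n hn
  have hn' : (n : 𝕂) ≠ 0 := Nat.cast_ne_zero.mpr hn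
  rw [add_assoc, add_sub_cancel_left, smul_add, smul_smul, smul_smul]
  congr 2 <;> field_simp

theorem ContinuousLinearMap.comp_exp_eq_of_comp_eq_zero {E F : Type*} [NormedAddCommGroup E]
    [NormedSpace 𝕂 E] [CompleteSpace E] [NormedAddCommGroup F] [NormedSpace 𝕂 F]
    {f : E →L[𝕂] F} {X : E →L[𝕂] E} (h : f ∘L X = 0) : f ∘L NormedSpace.exp X = f := by
  have hsum := (NormedSpace.exp_series_hasSum_exp' (𝕂 := 𝕂) X).mapL
    (ContinuousLinearMap.compL 𝕂 E E F f)
  refine hsum.unique ?_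
  convert hasSum_single (f := fun k : ℕ => ContinuousLinearMap.compL 𝕂 E E F f
    ((k.factorial⁻¹ : 𝕂) • X ^ k)) 0 fun k hk => ?_
  · ext; simp
  · obtain ⟨k, rfl⟩ := Nat.exists_eq_succ_of_ne_zero hk
    rw [ContinuousLinearMap.compL_apply, ContinuousLinearMap.comp_smul, pow_succ',
      ContinuousLinearMap.mul_def, ← ContinuousLinearMap.comp_assoc, h,
      ContinuousLinearMap.zero_comp, smul_zero]

end BanachAlgebra

section Jordan

variable {E : Type*} [NormedAddCommGroup E] [NormedSpace ℂ E] [CompleteSpace E]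

theorem ContinuousLinearMap.exp_apply_of_apply_apply_eq_zero {X : E →L[ℂ] E} {x : E}
    (hx : X (X x) = 0) : NormedSpace.exp X x = x + X x := by
  have hsum := (NormedSpace.exp_series_hasSum_exp' (𝕂 := ℂ) X).mapL
    (ContinuousLinearMap.apply ℂ E x)
  refine hsum.unique ?_
  convert hasSum_sum_of_ne_finset_zero (L := SummationFilter.unconditional ℕ)
    (s := Finset.range 2) fun k hk => ?_
  · simp [Finset.sum_range_succ]
  · obtain ⟨k, rfl⟩ : ∃ j, k = j + 2 := ⟨k - 2, by simp at hk; omega⟩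
    simp [pow_add, pow_two, hx]

theorem ContinuousLinearMap.exp_smul_apply_of_sub_smul_one_sq {T : E →L[ℂ] E} {γ : ℂ} {x : E}
    (hx : (T - γ • 1) ((T - γ • 1) x) = 0) (t : ℂ) :
    NormedSpace.exp (t • T) x = Complex.exp (t * γ) • (x + t • (T - γ • 1) x) := by
  have hsplit : t • T = algebraMap ℂ (E →L[ℂ] E) (t * γ) + t • (T - γ • 1) := by
    rw [Algebra.algebraMap_eq_smul_one, smul_sub, smul_smul]; abel
  let := NormedAlgebra.restrictScalars ℚ ℂ (E →L[ℂ] E)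
  rw [hsplit, NormedSpace.exp_add_of_commute (Algebra.commute_algebraMap_left _ _),
    ← NormedSpace.algebraMap_exp_comm, ← Complex.exp_eq_exp_ℂ, Algebra.algebraMap_eq_smul_one,
    mul_apply_eq_comp, _root_.smul_apply, one_apply_eq_self,
    exp_apply_of_apply_apply_eq_zero (by rw [_root_.smul_apply, _root_.smul_apply, map_smul, hx,
      smul_zero, smul_zero])]
  simp

theorem ContinuousLinearMap.sub_smul_one_apply_eq_zero_of_bounded {T : E →L[ℂ] E}
    (hT : ∀ x, ∃ C, ∀ t : ℝ, 0 ≤ t → ‖NormedSpace.exp ((t : ℂ) • T) x‖ ≤ C)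
    {γ : ℂ} (hγ : γ.re = 0) {x : E} (hx : (T - γ • 1) ((T - γ • 1) x) = 0) :
    (T - γ • 1) x = 0 := by
  set y := (T - γ • 1) x
  obtain ⟨C, hC⟩ := hT x
  have hlin : ∀ t : ℝ, 0 ≤ t → t * ‖y‖ ≤ C + ‖x‖ := fun t ht => by
    have h := hC t ht
    rw [exp_smul_apply_of_sub_smul_one_sq hx, norm_smul, Complex.norm_exp] at h
    simp only [Complex.mul_re, Complex.ofReal_re, Complex.ofReal_im, hγ, mul_zero, zero_mul,
      sub_zero, Real.exp_zero, one_mul] at h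
    have := norm_sub_le (x + (t : ℂ) • y) x
    rw [add_sub_cancel_left, norm_smul, Complex.norm_real, Real.norm_of_nonneg ht] at this
    linarith
  by_contra hy
  have hy' : 0 < ‖y‖ := norm_pos_iff.mpr hy
  have hC0 : 0 ≤ C + ‖x‖ := by simpa using hlin 0 le_rfl
  have := hlin ((C + ‖x‖ + 1) / ‖y‖) (by positivity)
  rw [div_mul_cancel₀ _ hy'.ne'] at this
  linarith

theorem ContinuousLinearMap.ker_pow_sub_smul_one_eq_ker {T : E →L[ℂ] E}
    (hT : ∀ x, ∃ C, ∀ t : ℝ, 0 ≤ t → ‖NormedSpace.exp ((t : ℂ) • T) x‖ ≤ C)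
    {γ : ℂ} (hγ : γ.re = 0) {k : ℕ} (hk : 1 ≤ k) :
    LinearMap.ker (((T : E →ₗ[ℂ] E) - γ • 1) ^ k) = LinearMap.ker ((T : E →ₗ[ℂ] E) - γ • 1) := by
  have hker : LinearMap.ker ((T : E →ₗ[ℂ] E) - γ • 1)
      = LinearMap.ker (((T : E →ₗ[ℂ] E) - γ • 1) ^ 2) := by
    refine le_antisymm (fun x hx => ?_) fun x hx => ?_
    · simp_all [pow_two]
    · exact sub_smul_one_apply_eq_zero_of_bounded hT hγ (by simpa [pow_two] using hx)
  obtain ⟨m, rfl⟩ := Nat.exists_eq_add_of_le hk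
  rw [← Module.End.ker_pow_constant (by rwa [pow_one]) m, pow_one]

end Jordan

namespace Matrix

theorem span_posSemidef_eq_top {n : Type*} [Fintype n] [DecidableEq n] :
    Submodule.span ℂ {A : Matrix n n ℂ | A.PosSemidef} = ⊤ := by
  open scoped MatrixOrder Matrix.Norms.L2Operator in
  simpa only [nonneg_iff_posSemidef] using CStarAlgebra.span_nonneg (A := Matrix n n ℂ)

theorem isClosed_setOf_posSemidef {n : Type*} [Fintype n] :
    IsClosed {A : Matrix n n ℂ | A.PosSemidef} := by
  simp only [posSemidef_iff_dotProduct_mulVec, Set.ofPred_and, Set.ofPred_forall]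
  refine (isClosed_eq (by fun_prop) continuous_id).inter (isClosed_iInter fun x => ?_)
  exact isClosed_Ici.preimage
    (continuous_const.dotProduct (continuous_id.matrix_mulVec continuous_const))

namespace PosSemidef

theorem norm_apply_sq_le {n : Type*} {A : Matrix n n ℂ} (hA : A.PosSemidef) (i j : n) :
    ‖A i j‖ ^ 2 ≤ (A i i).re * (A j j).re := by
  have hdet := (hA.submatrix ![i, j]).det_nonneg
  rw [det_fin_two] at hdet
  simp only [submatrix_apply, cons_val_zero, cons_val_one] at hdet
  have hii := Complex.nonneg_iff.mp (hA.diag_nonneg (i := i))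
  have hjj := Complex.nonneg_iff.mp (hA.diag_nonneg (i := j))
  rw [← hA.1.apply j i, Complex.star_def, Complex.mul_conj, Complex.normSq_eq_norm_sq] at hdet
  simpa [Complex.mul_re, ← hii.2, ← hjj.2, ← Complex.ofReal_pow] using
    (Complex.nonneg_iff.mp hdet).1

variable {n : Type*} [Fintype n] {A : Matrix n n ℂ}

theorem re_apply_self_le_trace_re (hA : A.PosSemidef) (i : n) : (A i i).re ≤ A.trace.re := by
  rw [trace, Complex.re_sum]
  exact Finset.single_le_sum (fun j _ => (Complex.nonneg_iff.mp (hA.diag_nonneg (i := j))).1)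
    (Finset.mem_univ i)

theorem norm_le_trace_re (hA : A.PosSemidef) : ‖A‖ ≤ A.trace.re := by
  have htr : 0 ≤ A.trace.re := (Complex.nonneg_iff.mp hA.trace_nonneg).1
  refine (norm_le_iff htr).mpr fun i j =>
    (pow_le_pow_iff_left₀ (norm_nonneg _) htr two_ne_zero).mp ?_
  refine (hA.norm_apply_sq_le i j).trans ?_
  rw [sq]
  exact mul_le_mul (hA.re_apply_self_le_trace_re i) (hA.re_apply_self_le_trace_re j)
    (Complex.nonneg_iff.mp (hA.diag_nonneg (i := j))).1 htr

end PosSemidef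

/-- `Matrix.normedAddCommGroup` induces the product topology only up to unfolding a definition, so
without this instance, instance search finds no operator norm on `Matrix n n ℂ →L[ℂ] Matrix n n ℂ`.
-/
noncomputable instance normedTopologicalSpace {n : Type*} [Fintype n] :
    TopologicalSpace (Matrix n n ℂ) :=
  Matrix.normedAddCommGroup.toUniformSpace.toTopologicalSpace

end Matrix

section Lindblad

variable {n ι : Type*} [Fintype n] [DecidableEq n] [Fintype ι] {H : Matrix n n ℂ}
  {V : ι → Matrix n n ℂ}

variable (H V) in
noncomputable def effectiveHamiltonian : Matrix n n ℂ :=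
  H - (Complex.I / 2) • ∑ d, (V d)ᴴ * V d

theorem lindbladOp_apply_eq (hH : H.IsHermitian) (ρ : Matrix n n ℂ) :
    lindbladOp H V ρ = -Complex.I • (effectiveHamiltonian H V * ρ - ρ * (effectiveHamiltonian H V)ᴴ)
      + ∑ d, V d * ρ * (V d)ᴴ := by
  have hS : (∑ d, (V d)ᴴ * V d)ᴴ = ∑ d, (V d)ᴴ * V d := by
    simp [conjTranspose_sum, conjTranspose_mul]
  simp only [lindbladOp, LinearMap.coe_mk, AddHom.coe_mk, effectiveHamiltonian,
    conjTranspose_sub, conjTranspose_smul, hH.eq, hS, Finset.sum_sub_distrib, ← Finset.smul_sum,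
    Finset.sum_add_distrib, ← Finset.sum_mul, ← Finset.mul_sum, sub_mul, mul_sub, smul_mul_assoc,
    mul_smul_comm, Complex.star_def, map_div₀, Complex.conj_I, map_ofNat]
  match_scalars <;> grind [Complex.I_sq]

variable (H V) in
noncomputable def lindbladEulerStep (s : ℝ) : Matrix n n ℂ →L[ℂ] Matrix n n ℂ :=
  1 + (s : ℂ) • LinearMap.toContinuousLinearMap (lindbladOp H V)
    + (s : ℂ) ^ 2 • LinearMap.toContinuousLinearMap
      (LinearMap.mulLeft ℂ (effectiveHamiltonian H V) ∘ₗ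
        LinearMap.mulRight ℂ (effectiveHamiltonian H V)ᴴ)

theorem lindbladEulerStep_apply (hH : H.IsHermitian) (s : ℝ) (ρ : Matrix n n ℂ) :
    lindbladEulerStep H V s ρ
      = (1 - (s * Complex.I) • effectiveHamiltonian H V) * ρ
          * (1 - (s * Complex.I) • effectiveHamiltonian H V)ᴴ
        + (s : ℂ) • ∑ d, V d * ρ * (V d)ᴴ := by
  simp only [lindbladEulerStep, _root_.add_apply, _root_.smul_apply,
    one_apply_eq_self, LinearMap.coe_toContinuousLinearMap', LinearMap.comp_apply,
    LinearMap.mulLeft_apply, LinearMap.mulRight_apply, lindbladOp_apply_eq hH,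
    conjTranspose_sub, conjTranspose_one, conjTranspose_smul, star_mul', Complex.star_def,
    Complex.conj_ofReal, Complex.conj_I, sub_mul, mul_sub, smul_mul_assoc, mul_smul_comm, one_mul,
    mul_one, smul_add, smul_sub, mul_assoc]
  match_scalars <;> grind [Complex.I_sq]

theorem posSemidef_lindbladEulerStep_pow_apply (hH : H.IsHermitian) {s : ℝ} (hs : 0 ≤ s) (k : ℕ)
    {ρ : Matrix n n ℂ} (hρ : ρ.PosSemidef) : ((lindbladEulerStep H V s ^ k) ρ).PosSemidef := by
  induction k with
  | zero => simpa using hρ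
  | succ k ih =>
    rw [pow_succ', mul_apply_eq_comp, lindbladEulerStep_apply hH]
    exact (ih.mul_mul_conjTranspose_same _).add
      ((posSemidef_sum _ fun d _ => ih.mul_mul_conjTranspose_same _).smul (by exact_mod_cast hs))

theorem tendsto_lindbladEulerStep_pow [Nonempty n] (t : ℝ) :
    Tendsto (fun m : ℕ => lindbladEulerStep H V (t / m) ^ m) atTop
      (𝓝 (NormedSpace.exp ((t : ℂ) • LinearMap.toContinuousLinearMap (lindbladOp H V)))) := by
  have := FiniteDimensional.complete ℂ (Matrix n n ℂ →L[ℂ] Matrix n n ℂ)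
  simpa only [lindbladEulerStep, Complex.ofReal_div, Complex.ofReal_natCast] using
    tendsto_one_add_smul_add_sq_smul_pow _ _ (t : ℂ)

theorem posSemidef_evolve [Nonempty n] (hH : H.IsHermitian) {t : ℝ} (ht : 0 ≤ t)
    {ρ : Matrix n n ℂ} (hρ : ρ.PosSemidef) : (evolve H V t ρ).PosSemidef := by
  have h := ((ContinuousLinearMap.apply ℂ (Matrix n n ℂ) ρ).continuous.tendsto _).comp
    (tendsto_lindbladEulerStep_pow (H := H) (V := V) t)
  exact Matrix.isClosed_setOf_posSemidef.mem_of_tendsto h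
    (Eventually.of_forall fun m => posSemidef_lindbladEulerStep_pow_apply hH (by positivity) m hρ)

theorem trace_lindbladOp (ρ : Matrix n n ℂ) : (lindbladOp H V ρ).trace = 0 := by
  simp only [lindbladOp, LinearMap.coe_mk, AddHom.coe_mk, trace_add, trace_smul, trace_sub,
    trace_sum, trace_mul_comm H ρ, sub_self, smul_zero, zero_add]
  refine Finset.sum_eq_zero fun d _ => ?_
  rw [trace_mul_cycle, trace_mul_comm ρ, smul_eq_mul]
  ring

theorem trace_evolve (t : ℝ) (ρ : Matrix n n ℂ) : (evolve H V t ρ).trace = ρ.trace := by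
  have h := ContinuousLinearMap.comp_exp_eq_of_comp_eq_zero
    (f := LinearMap.toContinuousLinearMap (traceLinearMap n ℂ ℂ))
    (X := (t : ℂ) • LinearMap.toContinuousLinearMap (lindbladOp H V))
    (by ext ρ; simp [trace_lindbladOp])
  exact DFunLike.congr_fun h ρ

theorem norm_evolve_le [Nonempty n] (hH : H.IsHermitian) {t : ℝ} (ht : 0 ≤ t)
    {ρ : Matrix n n ℂ} (hρ : ρ.PosSemidef) : ‖evolve H V t ρ‖ ≤ ρ.trace.re :=
  (posSemidef_evolve hH ht hρ).norm_le_trace_re.trans_eq (by rw [trace_evolve])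

theorem exists_bound_evolve [Nonempty n] (hH : H.IsHermitian) (x : Matrix n n ℂ) :
    ∃ C, ∀ t : ℝ, 0 ≤ t → ‖evolve H V t x‖ ≤ C := by
  have hx : x ∈ Submodule.span ℂ {A : Matrix n n ℂ | A.PosSemidef} := by
    rw [Matrix.span_posSemidef_eq_top]; trivial
  induction hx using Submodule.span_induction with
  | mem ρ hρ => exact ⟨ρ.trace.re, fun t ht => norm_evolve_le hH ht hρ⟩
  | zero => exact ⟨0, fun t _ => by simp [evolve]⟩
  | add x y _ _ hx hy =>
    obtain ⟨Cx, hCx⟩ := hx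
    obtain ⟨Cy, hCy⟩ := hy
    refine ⟨Cx + Cy, fun t ht => ?_⟩
    simpa only [evolve, map_add] using (norm_add_le _ _).trans (add_le_add (hCx t ht) (hCy t ht))
  | smul c x _ hx =>
    obtain ⟨C, hC⟩ := hx
    refine ⟨‖c‖ * C, fun t ht => ?_⟩
    simpa only [evolve, map_smul, norm_smul] using
      mul_le_mul_of_nonneg_left (hC t ht) (norm_nonneg c)

end Lindblad

/-- Eigenvalues of the Lindblad generator with zero real part have no nontrivial Jordan
blocks: generalized eigenspaces coincide with eigenspaces. -/
theorem lindblad_imaginary_eigenvalue_no_jordan_block (N : ℕ) (hN : 1 ≤ N)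
    (H : Matrix (Fin N) (Fin N) ℂ) (hH : H.IsHermitian)
    {ι : Type*} [Fintype ι] (V : ι → Matrix (Fin N) (Fin N) ℂ)
    (γ : ℂ) (hγ : γ.re = 0) (k : ℕ) (hk : 1 ≤ k) :
    LinearMap.ker ((lindbladOp H V - γ • (1 : Module.End ℂ (Matrix (Fin N) (Fin N) ℂ))) ^ k)
      = LinearMap.ker
        (lindbladOp H V - γ • (1 : Module.End ℂ (Matrix (Fin N) (Fin N) ℂ))) := by
  have : Nonempty (Fin N) := ⟨⟨0, hN⟩⟩
  exact (LinearMap.toContinuousLinearMap (lindbladOp H V)).ker_pow_sub_smul_one_eq_ker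
    (exists_bound_evolve hH) hγ hk
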